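/- Let P be the probability measure on ℕ with P({n}) = 1/2^n. For every integer n ≥ 4, any optimal set of n-means must contain the set {1, 2, …, n−3}. -/

import Mathlib

/-!
Suppose an integer `j ≤ n - 3` is missing from an optimal set `α` and let `a ∈ α` be nearest to
`j`. If `a` is also a nearest point of another support point, then, Voronoi regions being convex,
`a` serves two consecutive points `k, k + 1` with `k ≤ n - 3`; this alone costs at least
`2^{-k}/3 ≥ 2^{3-n}/3`, and the far tail adds a positive amount, so the error exceeds that of the
explicit set `candidateMeans n`, which is at most `2^{3-n}/3`. Otherwise moving `a` to `j` lowers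
the error at `j` to `0` without increasing it anywhere else.
-/

/-- Distortion error of a nonempty finite set α for the measure P({n}) = 1/2^n, n ≥ 1. -/
noncomputable def errG (α : Finset ℝ) (h : α.Nonempty) : ℝ :=
  ∑' n : ℕ, (1/2^(n+1) : ℝ) * α.inf' h (fun a => ((n+1 : ℝ) - a)^2)

open Finset

noncomputable def minSqDist (t : ℝ) (α : Finset ℝ) (h : α.Nonempty) : ℝ :=
  α.inf' h fun a => (t - a) ^ 2

section minSqDist

variable {t : ℝ} {α : Finset ℝ} (h : α.Nonempty)

lemma minSqDist_nonneg : 0 ≤ minSqDist t α h :=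
  le_inf' h _ fun _ _ => sq_nonneg _

lemma minSqDist_le {b : ℝ} (hb : b ∈ α) : minSqDist t α h ≤ (t - b) ^ 2 :=
  inf'_le _ hb

lemma exists_minSqDist_eq : ∃ b ∈ α, minSqDist t α h = (t - b) ^ 2 :=
  exists_mem_eq_inf' h _

lemma minSqDist_eq_zero_of_mem (ht : t ∈ α) : minSqDist t α h = 0 :=
  le_antisymm (by simpa using minSqDist_le (t := t) h ht) (minSqDist_nonneg h)

lemma minSqDist_pos_of_notMem (ht : t ∉ α) : 0 < minSqDist t α h := by
  obtain ⟨b, hb, hbt⟩ := exists_minSqDist_eq (t := t) h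
  have htb : t - b ≠ 0 := sub_ne_zero.2 fun htb => ht (htb ▸ hb)
  rw [hbt]
  positivity

end minSqDist

lemma sq_sub_le_sq_sub_of_le_of_le {a b x y t : ℝ} (hx : (x - a) ^ 2 ≤ (x - b) ^ 2)
    (hy : (y - a) ^ 2 ≤ (y - b) ^ 2) (hxt : x ≤ t) (hty : t ≤ y) :
    (t - a) ^ 2 ≤ (t - b) ^ 2 := by
  rcases (hxt.trans hty).eq_or_lt with rfl | hxy
  · rwa [le_antisymm hty hxt]
  -- `(t - a)² - (t - b)²` is affine in `t`
  nlinarith [mul_nonneg (sub_nonneg.2 hty) (sub_nonneg.2 hx),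
    mul_nonneg (sub_nonneg.2 hxt) (sub_nonneg.2 hy)]

lemma minSqDist_eq_of_nearest_of_nearest {α : Finset ℝ} (h : α.Nonempty) {a x y t : ℝ}
    (ha : a ∈ α) (hx : ∀ b ∈ α, (x - a) ^ 2 ≤ (x - b) ^ 2) (hy : ∀ b ∈ α, (y - a) ^ 2 ≤ (y - b) ^ 2)
    (hxt : x ≤ t) (hty : t ≤ y) : minSqDist t α h = (t - a) ^ 2 :=
  le_antisymm (minSqDist_le h ha) <|
    le_inf' h _ fun b hb => sq_sub_le_sq_sub_of_le_of_le (hx b hb) (hy b hb) hxt hty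

lemma hasSum_sq_sub_one_mul_half_pow :
    HasSum (fun m : ℕ => ((m : ℝ) - 1) ^ 2 * (1 / 2) ^ m) 4 := by
  have hr : ‖(1 / 2 : ℝ)‖ < 1 := by norm_num
  have h2 := hasSum_choose_mul_geometric_of_norm_lt_one 2 hr
  have h1 := hasSum_choose_mul_geometric_of_norm_lt_one 1 hr
  have h0 := hasSum_choose_mul_geometric_of_norm_lt_one 0 hr
  -- `(m - 1)² = 2 C(m + 2, 2) - 5 C(m + 1, 1) + 4 C(m, 0)`
  have hsum := ((h2.mul_left 2).sub (h1.mul_left 5)).add (h0.mul_left 4)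
  norm_num at hsum
  refine hsum.congr_fun fun m => ?_
  simp only [Nat.cast_choose_two]
  push_cast
  ring

section errG

variable {α : Finset ℝ} (h : α.Nonempty)

lemma errG_eq_tsum : errG α h = ∑' m : ℕ, (1 / 2 : ℝ) ^ (m + 1) * minSqDist ((m : ℝ) + 1) α h :=
  tsum_congr fun m => by rw [one_div_pow]; rfl

lemma summable_errG_terms :
    Summable fun m : ℕ => (1 / 2 : ℝ) ^ (m + 1) * minSqDist ((m : ℝ) + 1) α h := by
  obtain ⟨a, ha⟩ := h
  have hmaj : Summable fun m : ℕ => (1 / 2 : ℝ) ^ (m + 1) * (((m : ℝ) + 1) - a) ^ 2 := by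
    have hr : ‖(1 / 2 : ℝ)‖ < 1 := by norm_num
    have h2 := summable_pow_mul_geometric_of_norm_lt_one 2 hr
    have h1 := summable_pow_mul_geometric_of_norm_lt_one 1 hr
    have h0 := summable_geometric_of_norm_lt_one hr
    refine (((h2.mul_left (1 / 2)).add (h1.mul_left (1 - a))).add
      (h0.mul_left ((1 - a) ^ 2 / 2))).congr fun m => ?_
    ring
  exact hmaj.of_nonneg_of_le (fun m => mul_nonneg (by positivity) (minSqDist_nonneg _))
    fun m => mul_le_mul_of_nonneg_left (minSqDist_le _ ha) (by positivity)

lemma errG_nonneg : 0 ≤ errG α h := by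
  rw [errG_eq_tsum]
  exact tsum_nonneg fun m => mul_nonneg (by positivity) (minSqDist_nonneg _)

lemma sum_le_errG (S : Finset ℕ) :
    ∑ m ∈ S, (1 / 2 : ℝ) ^ (m + 1) * minSqDist ((m : ℝ) + 1) α h ≤ errG α h := by
  rw [errG_eq_tsum]
  exact (summable_errG_terms h).sum_le_tsum S fun m _ =>
    mul_nonneg (by positivity) (minSqDist_nonneg _)

lemma errG_lt_errG_of_minSqDist {β : Finset ℝ} (hβ : β.Nonempty) (i : ℕ)
    (hle : ∀ m : ℕ, minSqDist ((m : ℝ) + 1) β hβ ≤ minSqDist ((m : ℝ) + 1) α h)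
    (hlt : minSqDist ((i : ℝ) + 1) β hβ < minSqDist ((i : ℝ) + 1) α h) :
    errG β hβ < errG α h := by
  rw [errG_eq_tsum, errG_eq_tsum]
  exact Summable.tsum_lt_tsum_of_nonneg (fun m => mul_nonneg (by positivity) (minSqDist_nonneg _))
    (fun m => mul_le_mul_of_nonneg_left (hle m) (by positivity))
    (mul_lt_mul_of_pos_left hlt (by positivity)) (summable_errG_terms h)

end errG

/-- The paper's `{1, …, n − 2, Av[n − 1, n], Av[n + 1, ∞)}`; the two conditional means are
`n - 2/3` and `n + 2`. -/
noncomputable def candidateMeans (n : ℕ) : Finset ℝ :=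
  (Icc 1 (n - 2)).image (fun i : ℕ => (i : ℝ)) ∪ {(n : ℝ) - 2 / 3, (n : ℝ) + 2}

lemma candidateMeans_nonempty (n : ℕ) : (candidateMeans n).Nonempty :=
  ⟨(n : ℝ) + 2, mem_union_right _ (by simp)⟩

lemma card_candidateMeans_le {n : ℕ} (hn : 2 ≤ n) : (candidateMeans n).card ≤ n :=
  calc (candidateMeans n).card
      ≤ ((Icc 1 (n - 2)).image (fun i : ℕ => (i : ℝ))).card + card {(n : ℝ) - 2 / 3, (n : ℝ) + 2} :=
        card_union_le _ _
    _ ≤ (Icc 1 (n - 2)).card + 2 := add_le_add card_image_le card_le_two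
    _ = n := by rw [Nat.card_Icc]; omega

lemma errG_candidateMeans_le {n : ℕ} (hn : 2 ≤ n) :
    errG (candidateMeans n) (candidateMeans_nonempty n) ≤ 8 / 3 * (1 / 2) ^ n := by
  obtain ⟨k, rfl⟩ := Nat.exists_eq_add_of_le' hn
  set β := candidateMeans (k + 2)
  have hβ := candidateMeans_nonempty (k + 2)
  have hlow : (((k + 2 : ℕ) : ℝ) - 2 / 3) ∈ β := mem_union_right _ (by simp)
  have hhigh : (((k + 2 : ℕ) : ℝ) + 2) ∈ β := mem_union_right _ (by simp)
  have hhead : ∑ m ∈ range (k + 2), (1 / 2 : ℝ) ^ (m + 1) * minSqDist ((m : ℝ) + 1) β hβ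
      ≤ 2 / 3 * (1 / 2) ^ (k + 2) := by
    have hzero : ∀ m ∈ range k, (1 / 2 : ℝ) ^ (m + 1) * minSqDist ((m : ℝ) + 1) β hβ = 0 :=
      fun m hm => by
        rw [minSqDist_eq_zero_of_mem, mul_zero]
        refine mem_union_left _ (mem_image.2 ⟨m + 1, mem_Icc.2 ⟨by omega, ?_⟩, by push_cast; rfl⟩)
        have := mem_range.1 hm
        omega
    have hk := minSqDist_le (t := (k : ℝ) + 1) hβ hlow
    have hk1 := minSqDist_le (t := ((k + 1 : ℕ) : ℝ) + 1) hβ hlow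
    rw [sum_range_succ, sum_range_succ, sum_eq_zero hzero, zero_add]
    push_cast at hk hk1 ⊢
    have hw : (1 / 2 : ℝ) ^ (k + 1) = 2 * (1 / 2) ^ (k + 2) := by rw [pow_succ]; ring
    rw [hw]
    nlinarith [pow_pos (one_half_pos (α := ℝ)) (k + 2)]
  have htail : ∑' i : ℕ, (1 / 2 : ℝ) ^ (i + (k + 2) + 1) *
      minSqDist (((i + (k + 2) : ℕ) : ℝ) + 1) β hβ ≤ 2 * (1 / 2) ^ (k + 2) := by
    calc _ ≤ (1 / 2 : ℝ) ^ (k + 3) * 4 :=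
          hasSum_le (fun i => ?_) ((summable_nat_add_iff (k + 2)).2 (summable_errG_terms hβ)).hasSum
            (hasSum_sq_sub_one_mul_half_pow.mul_left _)
      _ = 2 * (1 / 2) ^ (k + 2) := by rw [pow_succ]; ring
    have hi : minSqDist (((i + (k + 2) : ℕ) : ℝ) + 1) β hβ ≤ ((i : ℝ) - 1) ^ 2 :=
      (minSqDist_le hβ hhigh).trans_eq (by push_cast; ring)
    rw [show i + (k + 2) + 1 = (k + 3) + i by omega, pow_add, mul_assoc, mul_comm (_ ^ 2)]
    gcongr
  rw [errG_eq_tsum, ← (summable_errG_terms hβ).sum_add_tsum_nat_add (k + 2)]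
  linarith

lemma div_three_le_mul_sq_add_mul_sq {w : ℝ} (hw : 0 ≤ w) (t u : ℝ) :
    w / 3 ≤ w * (t - u) ^ 2 + w / 2 * (t + 1 - u) ^ 2 := by
  nlinarith [mul_nonneg hw (sq_nonneg (u - t - 1 / 3))]

lemma exists_nat_notMem_add_one_notMem (α : Finset ℝ) (S : Finset ℕ) :
    ∃ s ∉ S, (s : ℝ) + 1 ∉ α := by
  have hinj : Function.Injective fun m : ℕ => (m : ℝ) + 1 := fun a b hab => by simpa using hab
  obtain ⟨s, hs⟩ := Infinite.exists_notMem_finset (S ∪ α.preimage _ hinj.injOn)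
  simp only [mem_union, mem_preimage, not_or] at hs
  exact ⟨s, hs⟩

lemma half_pow_div_three_lt_errG {α : Finset ℝ} (h : α.Nonempty) {a : ℝ} (ha : a ∈ α)
    {x y : ℕ} (hxy : x < y) (hx : ∀ b ∈ α, ((x : ℝ) + 1 - a) ^ 2 ≤ ((x : ℝ) + 1 - b) ^ 2)
    (hy : ∀ b ∈ α, ((y : ℝ) + 1 - a) ^ 2 ≤ ((y : ℝ) + 1 - b) ^ 2) :
    (1 / 2 : ℝ) ^ (x + 1) / 3 < errG α h := by
  have hnear : ∀ m : ℕ, x ≤ m → m ≤ y → minSqDist ((m : ℝ) + 1) α h = ((m : ℝ) + 1 - a) ^ 2 :=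
    fun m hxm hmy => minSqDist_eq_of_nearest_of_nearest h ha hx hy
      (by gcongr) (by gcongr)
  obtain ⟨s, hs, hsα⟩ := exists_nat_notMem_add_one_notMem α {x, x + 1}
  have hmerge := div_three_le_mul_sq_add_mul_sq (w := (1 / 2 : ℝ) ^ (x + 1)) (by positivity)
    ((x : ℝ) + 1) a
  have hfar := mul_pos (pow_pos (one_half_pos (α := ℝ)) (s + 1)) (minSqDist_pos_of_notMem h hsα)
  have hsum := sum_le_errG h (insert s {x, x + 1})
  rw [sum_insert hs, sum_pair (by omega), hnear x le_rfl hxy.le, hnear (x + 1) (by omega) hxy,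
    pow_succ _ (x + 1)] at hsum
  push_cast at hsum
  linarith

lemma eight_div_three_mul_half_pow_lt_errG {α : Finset ℝ} (h : α.Nonempty) {a : ℝ} (ha : a ∈ α)
    {n i m : ℕ} (hin : i + 4 ≤ n) (hmi : m ≠ i)
    (hi : ∀ b ∈ α, ((i : ℝ) + 1 - a) ^ 2 ≤ ((i : ℝ) + 1 - b) ^ 2)
    (hm : ∀ b ∈ α, ((m : ℝ) + 1 - a) ^ 2 ≤ ((m : ℝ) + 1 - b) ^ 2) :
    8 / 3 * (1 / 2 : ℝ) ^ n < errG α h := by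
  obtain ⟨x, hxi, hlow⟩ : ∃ x ≤ i, (1 / 2 : ℝ) ^ (x + 1) / 3 < errG α h := by
    rcases lt_or_gt_of_ne hmi with hmi | hmi
    · exact ⟨m, hmi.le, half_pow_div_three_lt_errG h ha hmi hm hi⟩
    · exact ⟨i, le_rfl, half_pow_div_three_lt_errG h ha hmi hi hm⟩
  have hpow : (1 / 2 : ℝ) ^ n ≤ (1 / 2) ^ (x + 1) / 8 :=
    calc (1 / 2 : ℝ) ^ n ≤ (1 / 2) ^ (x + 1 + 3) :=
          pow_le_pow_of_le_one (by norm_num) (by norm_num) (by omega)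
      _ = (1 / 2) ^ (x + 1) / 8 := by ring
  linarith

lemma errG_insert_erase_lt {α : Finset ℝ} (h : α.Nonempty) {a : ℝ} (ha : a ∈ α) {i : ℕ}
    (hi : (i : ℝ) + 1 ∉ α)
    (hfar : ∀ m ≠ i, ∃ b ∈ α, ((m : ℝ) + 1 - b) ^ 2 < ((m : ℝ) + 1 - a) ^ 2) :
    errG (insert ((i : ℝ) + 1) (α.erase a)) (insert_nonempty _ _) < errG α h := by
  have hβ : minSqDist ((i : ℝ) + 1) (insert ((i : ℝ) + 1) (α.erase a)) (insert_nonempty _ _) = 0 :=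
    minSqDist_eq_zero_of_mem _ (mem_insert_self _ _)
  refine errG_lt_errG_of_minSqDist h _ i (fun m => ?_) (hβ ▸ minSqDist_pos_of_notMem h hi)
  rcases eq_or_ne m i with rfl | hmi
  · exact hβ ▸ minSqDist_nonneg h
  obtain ⟨c, hc, hmc⟩ := exists_minSqDist_eq (t := (m : ℝ) + 1) h
  have hca : c ≠ a := by
    rintro rfl
    obtain ⟨b, hb, hba⟩ := hfar m hmi
    exact (minSqDist_le h hb).not_gt (hmc ▸ hba)
  exact hmc ▸ minSqDist_le _ (mem_insert_of_mem (mem_erase.2 ⟨hca, hc⟩))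

lemma errG_le_of_eq_sInf {n : ℕ} {α : Finset ℝ} {h : α.Nonempty}
    (hopt : errG α h =
      sInf {v : ℝ | ∃ (β : Finset ℝ) (hβ : β.Nonempty), β.card ≤ n ∧ v = errG β hβ})
    {β : Finset ℝ} (hβ : β.Nonempty) (hcard : β.card ≤ n) : errG α h ≤ errG β hβ :=
  hopt ▸ csInf_le ⟨0, by rintro _ ⟨γ, hγ, -, rfl⟩; exact errG_nonneg hγ⟩ ⟨β, hβ, hcard, rfl⟩

theorem stmt14_general (n : ℕ) (α : Finset ℝ) (h : α.Nonempty)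
    (hcard : α.card ≤ n)
    (hopt : errG α h =
      sInf {v : ℝ | ∃ (β : Finset ℝ) (hβ : β.Nonempty), β.card ≤ n ∧ v = errG β hβ}) :
    ∀ j ∈ Finset.Icc 1 (n - 3), (j : ℝ) ∈ α := by
  intro j hj
  obtain ⟨i, rfl⟩ : ∃ i, j = i + 1 := ⟨j - 1, by grind⟩
  have hin : i + 4 ≤ n := by grind
  push_cast
  by_contra hiα
  obtain ⟨a, ha, hia⟩ := exists_minSqDist_eq (t := (i : ℝ) + 1) h
  by_cases hshared : ∃ m ≠ i, ∀ b ∈ α, ((m : ℝ) + 1 - a) ^ 2 ≤ ((m : ℝ) + 1 - b) ^ 2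
  · obtain ⟨m, hmi, hm⟩ := hshared
    have hlow := eight_div_three_mul_half_pow_lt_errG h ha hin hmi
      (fun b hb => hia ▸ minSqDist_le h hb) hm
    have hup := (errG_le_of_eq_sInf hopt _ (card_candidateMeans_le (by omega))).trans
      (errG_candidateMeans_le (by omega))
    linarith
  · push Not at hshared
    exact (errG_insert_erase_lt h ha hiα hshared).not_ge <| errG_le_of_eq_sInf hopt _ <|
      (card_insert_le _ _).trans ((card_erase_add_one ha).trans_le hcard)

/-- Any optimal set of n-means (n ≥ 4) contains {1, 2, …, n−3}. -/
theorem stmt14 (n : ℕ) (hn : 4 ≤ n) (α : Finset ℝ) (h : α.Nonempty)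
    (hcard : α.card ≤ n)
    (hopt : errG α h =
      sInf {v : ℝ | ∃ (β : Finset ℝ) (hβ : β.Nonempty), β.card ≤ n ∧ v = errG β hβ}) :
    ∀ j ∈ Finset.Icc 1 (n - 3), (j : ℝ) ∈ α :=
  stmt14_general n α h hcard hopt
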